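/- If m is a probability measure on ℝ with density f with respect to Lebesgue measure satisfying 0 ≤ f ≤ 1 and supported in [a,b], then b − a ≥ 1, the first moment α = ∫ x dm satisfies a + 1/2 ≤ α ≤ b − 1/2, and the variance satisfies ∫ x² dm − α² ≥ 1/12. -/

import Mathlib

/-!
Bathtub principle: if `0 ≤ f ≤ 1` has the same mass as a set `s`, and `g ≤ c` on `s` while
`c ≤ g` wherever `f` lives outside `s`, then `(g - c) (f - 1_s) ≥ 0` pointwise, hence
`∫_s g ≤ ∫ g f`. With `s` an interval of length one, `g = x` on `[a, a + 1]` and `g = -x` on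
`[b - 1, b]` bound the mean, `g = (x - α)²` on `[α - 1/2, α + 1/2]` bounds the variance by
`∫_{-1/2}^{1/2} x² dx = 1/12`, and `1 ≤ b - a` follows from the two mean bounds.
-/

open MeasureTheory Set

theorem ContinuousOn.integrable_mul_of_forall_notMem_eq_zero {X : Type*} [TopologicalSpace X]
    [T2Space X] [MeasurableSpace X] [OpensMeasurableSpace X] {μ : Measure X}
    [IsFiniteMeasureOnCompacts μ] {K : Set X} {g f : X → ℝ} {C : ℝ} (hK : IsCompact K)
    (hg : ContinuousOn g K) (hf : AEStronglyMeasurable f μ) (hfC : ∀ x, ‖f x‖ ≤ C)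
    (hsupp : ∀ x ∉ K, f x = 0) : Integrable (fun x => g x * f x) μ :=
  IntegrableOn.integrable_of_forall_notMem_eq_zero
    ((hg.integrableOn_compact hK).mul_bdd hf.restrict (ae_of_all _ hfC))
    fun x hx => by simp [hsupp x hx]

section SetIntegral

variable {X : Type*} [MeasurableSpace X] {μ : Measure X} {f g : X → ℝ} {s : Set X} {c : ℝ}

theorem setIntegral_le_integral_mul_of_le_one (hs : MeasurableSet s) (hμs : μ s ≠ ⊤)
    (hf0 : ∀ x ∉ s, 0 ≤ f x) (hf1 : ∀ x ∈ s, f x ≤ 1)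
    (hg_in : ∀ x ∈ s, g x ≤ c) (hg_out : ∀ x ∉ s, f x ≠ 0 → c ≤ g x)
    (hf : Integrable f μ) (hg : IntegrableOn g s μ) (hgf : Integrable (fun x => g x * f x) μ)
    (hmass : ∫ x, f x ∂μ = μ.real s) :
    ∫ x in s, g x ∂μ ≤ ∫ x, g x * f x ∂μ := by
  have hpt : ∀ x, s.indicator (fun x => g x - c) x ≤ g x * f x - c * f x := by
    intro x
    by_cases hx : x ∈ s
    · rw [indicator_of_mem hx]
      nlinarith [hg_in x hx, hf1 x hx]
    · rw [indicator_of_notMem hx, ← sub_mul]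
      by_cases hfx : f x = 0
      · simp [hfx]
      · exact mul_nonneg (sub_nonneg.2 (hg_out x hx hfx)) (hf0 x hx)
  have hc : IntegrableOn (fun _ => c) s μ := integrableOn_const hμs
  have hmono := integral_mono (f := s.indicator fun x => g x - c)
    (g := fun x => g x * f x - c * f x)
    ((hg.sub hc).integrable_indicator hs) (hgf.sub (hf.const_mul c)) hpt
  rw [integral_indicator hs, integral_sub hg hc, integral_sub hgf (hf.const_mul c),
    integral_const_mul, setIntegral_const, hmass, smul_eq_mul, mul_comm] at hmono
  linarith

end SetIntegral

theorem integral_sub_sq_mul {μ : Measure ℝ} {f : ℝ → ℝ} (hf : Integrable f μ)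
    (h1 : Integrable (fun x => x * f x) μ) (h2 : Integrable (fun x => x ^ 2 * f x) μ) (c : ℝ) :
    ∫ x, (x - c) ^ 2 * f x ∂μ
      = ∫ x, x ^ 2 * f x ∂μ - 2 * c * ∫ x, x * f x ∂μ + c ^ 2 * ∫ x, f x ∂μ := by
  have hexp : (fun x => (x - c) ^ 2 * f x)
      = fun x => x ^ 2 * f x - 2 * c * (x * f x) + c ^ 2 * f x := by
    funext x; ring
  rw [hexp, integral_add (f := fun x => x ^ 2 * f x - 2 * c * (x * f x))
    (h2.sub (h1.const_mul _)) (hf.const_mul _),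
    integral_sub h2 (h1.const_mul _), integral_const_mul, integral_const_mul]

section UnitMass

variable {f : ℝ → ℝ} (hf0 : ∀ x, 0 ≤ f x) (hf1 : ∀ x, f x ≤ 1) (hf : Integrable f)
  (hmass : ∫ x, f x = 1)
include hf0 hf1 hf hmass

theorem intervalIntegral_le_integral_mul_of_le_one {g : ℝ → ℝ} {p c : ℝ}
    (hg : Continuous g) (hgf : Integrable (fun x => g x * f x))
    (hg_in : ∀ x ∈ Icc p (p + 1), g x ≤ c)
    (hg_out : ∀ x ∉ Icc p (p + 1), f x ≠ 0 → c ≤ g x) :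
    ∫ x in p..p + 1, g x ≤ ∫ x, g x * f x := by
  rw [intervalIntegral.integral_of_le (by linarith), ← integral_Icc_eq_integral_Ioc]
  refine setIntegral_le_integral_mul_of_le_one measurableSet_Icc measure_Icc_lt_top.ne
    (fun x _ => hf0 x) (fun x _ => hf1 x) hg_in hg_out hf hg.integrableOn_Icc hgf ?_
  rw [hmass, Real.volume_real_Icc_of_le (by linarith)]
  ring

theorem add_half_le_integral_mul_of_forall_lt_eq_zero {a : ℝ}
    (h1 : Integrable (fun x => x * f x)) (hsupp : ∀ x < a, f x = 0) :
    a + 1 / 2 ≤ ∫ x, x * f x := by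
  have := intervalIntegral_le_integral_mul_of_le_one hf0 hf1 hf hmass (c := a + 1) continuous_id
    h1 (fun x hx => hx.2) fun x hx hfx => by
      have hax : a ≤ x := not_lt.1 (mt (hsupp x) hfx)
      simp only [mem_Icc, not_and, not_le] at hx
      exact (hx hax).le
  simp only [id, integral_id] at this
  linarith

theorem integral_mul_le_sub_half_of_forall_gt_eq_zero {b : ℝ}
    (h1 : Integrable (fun x => x * f x)) (hsupp : ∀ x > b, f x = 0) :
    ∫ x, x * f x ≤ b - 1 / 2 := by
  have := intervalIntegral_le_integral_mul_of_le_one hf0 hf1 hf hmass (p := b - 1) (c := 1 - b)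
    continuous_neg (by simpa only [neg_mul] using (h1.neg : Integrable fun x => -(x * f x)))
    (fun x hx => by linarith [hx.1]) fun x hx hfx => by
      have hxb : x ≤ b := not_lt.1 (mt (hsupp x) hfx)
      simp only [mem_Icc, not_and, not_le] at hx
      rcases le_or_gt (b - 1) x with h | h
      · linarith [hx h]
      · linarith
  rw [intervalIntegral.integral_neg, integral_id] at this
  simp only [neg_mul, integral_neg] at this
  linarith

theorem one_div_twelve_le_integral_sub_sq_mul (m : ℝ)
    (h2 : Integrable (fun x => (x - m) ^ 2 * f x)) :
    1 / 12 ≤ ∫ x, (x - m) ^ 2 * f x := by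
  have := intervalIntegral_le_integral_mul_of_le_one hf0 hf1 hf hmass (p := m - 1 / 2)
    (c := 1 / 4) (by fun_prop) h2 (fun x hx => by nlinarith [hx.1, hx.2]) fun x hx _ => by
      simp only [mem_Icc, not_and, not_le] at hx
      rcases le_or_gt (m - 1 / 2) x with h | h
      · nlinarith [hx h]
      · nlinarith
  rw [intervalIntegral.integral_comp_sub_right (fun x => x ^ 2), integral_pow] at this
  linarith

end UnitMass

/-- If `m` is a probability measure on `ℝ` with density `f` (w.r.t. Lebesgue measure)
satisfying `0 ≤ f ≤ 1` and supported in `[a,b]`, then `b - a ≥ 1`, the mean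
`α = ∫ x f(x) dx` satisfies `a + 1/2 ≤ α ≤ b - 1/2`, and the variance satisfies
`∫ x² f(x) dx - α² ≥ 1/12`. -/
theorem density_bounded_moment_bounds (f : ℝ → ℝ) (a b : ℝ)
    (hmeas : Measurable f) (h0 : ∀ x, 0 ≤ f x) (h1 : ∀ x, f x ≤ 1)
    (hsupp : ∀ x, x ∉ Set.Icc a b → f x = 0)
    (hprob : ∫ x, f x = 1) :
    1 ≤ b - a ∧
    a + 1 / 2 ≤ ∫ x, x * f x ∧
    (∫ x, x * f x) ≤ b - 1 / 2 ∧
    1 / 12 ≤ (∫ x, x ^ 2 * f x) - (∫ x, x * f x) ^ 2 := by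
  have hint : ∀ g : ℝ → ℝ, Continuous g → Integrable (fun x => g x * f x) := fun g hg =>
    hg.continuousOn.integrable_mul_of_forall_notMem_eq_zero isCompact_Icc
      hmeas.aestronglyMeasurable (fun x => by rw [Real.norm_of_nonneg (h0 x)]; exact h1 x) hsupp
  have hf : Integrable f := by simpa using hint (fun _ => 1) continuous_const
  have hlow := add_half_le_integral_mul_of_forall_lt_eq_zero h0 h1 hf hprob
    (hint id continuous_id) fun x hx => hsupp x fun h => (not_le.2 hx) h.1
  have hup := integral_mul_le_sub_half_of_forall_gt_eq_zero h0 h1 hf hprob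
    (hint id continuous_id) fun x hx => hsupp x fun h => (not_le.2 hx) h.2
  have hvar := one_div_twelve_le_integral_sub_sq_mul h0 h1 hf hprob (∫ x, x * f x)
    (hint _ (by fun_prop))
  rw [integral_sub_sq_mul hf (hint id continuous_id) (hint (· ^ 2) (by fun_prop)), hprob] at hvar
  exact ⟨by linarith, hlow, hup, by linarith⟩
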